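/- In the normal random effects publication bias model where θ ~ N(θ₀, τ²), x | θ ~ N(θ, σ²), the p-value u depends only on x and σ via u = 1 − Φ(x/σ·scaling) (a strictly decreasing function of x), and the pair (x, θ) is resampled until acceptance with step-function acceptance probability w(u) = Σ_j ρ_j 1_{(α_{j−1}, α_j]}(u), the marginal density of the observed x is f(x | θ₀, τ, σ) = Σ_{j=1}^{J} π*_j(θ₀, τ, σ) φ_{[c_j, c_{j−1})}(x; θ₀, √(τ² + σ²)), where c_j = Φ^{−1}(1 − α_j) (scaled appropriately) and π*_j(θ₀, τ, σ) = ρ_j (Φ(c_{j−1}; θ₀, √(τ²+σ²)) − Φ(c_j; θ₀, √(τ²+σ²))) / Σ_k ρ_k (Φ(c_{k−1}; θ₀, √(τ²+σ²)) − Φ(c_k; θ₀, √(τ²+σ²))). -/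

import Mathlib

open MeasureTheory Set Finset

/-- The density of `N(θ, σ²)`. -/
noncomputable def normpdf (θ σ x : ℝ) : ℝ :=
  (σ * Real.sqrt (2 * Real.pi))⁻¹ * Real.exp (-(x - θ) ^ 2 / (2 * σ ^ 2))

/-- The standard normal CDF `Φ`. -/
noncomputable def Phi (x : ℝ) : ℝ := ∫ t in Set.Iic x, normpdf 0 1 t

lemma normpdf_pos (θ : ℝ) {σ : ℝ} (hσ : 0 < σ) (x : ℝ) : 0 < normpdf θ σ x := by
  unfold normpdf
  have h2π : (0:ℝ) < Real.sqrt (2 * Real.pi) := Real.sqrt_pos.mpr (by positivity)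
  positivity

lemma normpdf_eq_gaussian (θ : ℝ) {σ : ℝ} (hσ : 0 < σ) :
    normpdf θ σ = ProbabilityTheory.gaussianPDFReal θ ⟨σ ^ 2, sq_nonneg σ⟩ := by
  funext x
  unfold normpdf ProbabilityTheory.gaussianPDFReal
  change _ = (Real.sqrt (2 * Real.pi * (σ ^ 2)))⁻¹ * Real.exp (-(x - θ) ^ 2 / (2 * (σ ^ 2)))
  congr 2
  rw [Real.sqrt_mul (by positivity : (0:ℝ) ≤ 2 * Real.pi), Real.sqrt_sq hσ.le, mul_comm]

lemma integrable_normpdf (θ : ℝ) {σ : ℝ} (hσ : 0 < σ) : Integrable (normpdf θ σ) := by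
  rw [normpdf_eq_gaussian θ hσ]
  exact ProbabilityTheory.integrable_gaussianPDFReal _ _

lemma integral_normpdf (θ : ℝ) {σ : ℝ} (hσ : 0 < σ) : ∫ x, normpdf θ σ x = 1 := by
  rw [normpdf_eq_gaussian θ hσ]
  refine ProbabilityTheory.integral_gaussianPDFReal_eq_one θ ?_
  exact fun h => absurd (congrArg NNReal.toReal h) (by change σ ^ 2 ≠ 0; positivity)

lemma continuous_normpdf (θ σ : ℝ) : Continuous (normpdf θ σ) := by
  unfold normpdf; fun_prop

lemma setIntegral_normpdf_pos (θ : ℝ) {σ : ℝ} (hσ : 0 < σ) {s : Set ℝ}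
    (hs : 0 < volume s) : 0 < ∫ x in s, normpdf θ σ x := by
  rw [setIntegral_pos_iff_support_of_nonneg_ae
    (ae_of_all _ fun x => (normpdf_pos θ hσ x).le) ((integrable_normpdf θ hσ).integrableOn)]
  have : Function.support (normpdf θ σ) = Set.univ :=
    Set.eq_univ_of_forall fun z => (normpdf_pos θ hσ z).ne'
  rwa [this, Set.univ_inter]

lemma Phi_add {a b : ℝ} (hab : a ≤ b) :
    Phi b = Phi a + ∫ t in Set.Ioc a b, normpdf 0 1 t := by
  have hi := integrable_normpdf 0 one_pos
  rw [Phi, Phi, ← MeasureTheory.setIntegral_union (Set.Iic_disjoint_Ioc le_rfl)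
    measurableSet_Ioc hi.integrableOn hi.integrableOn, Set.Iic_union_Ioc_eq_Iic hab]

lemma Phi_mono : Monotone Phi := by
  intro a b hab
  rw [Phi_add hab]
  have : 0 ≤ ∫ t in Set.Ioc a b, normpdf 0 1 t :=
    setIntegral_nonneg measurableSet_Ioc fun t _ => (normpdf_pos 0 one_pos t).le
  linarith

lemma continuous_Phi : Continuous Phi := by
  set C : ℝ := (Real.sqrt (2 * Real.pi))⁻¹ with hC
  have hCpos : 0 < C := by
    rw [hC]; exact inv_pos.mpr (Real.sqrt_pos.mpr (by positivity))
  have key : ∀ a b : ℝ, a ≤ b → Phi b - Phi a ≤ C * (b - a) := by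
    intro a b hab
    have hbound : ∀ t ∈ Set.Ioc a b, normpdf 0 1 t ≤ C := by
      intro t _
      unfold normpdf
      rw [one_mul]
      calc (Real.sqrt (2 * Real.pi))⁻¹ * Real.exp (-(t - 0) ^ 2 / (2 * 1 ^ 2))
          ≤ (Real.sqrt (2 * Real.pi))⁻¹ * 1 := by
            gcongr
            exact Real.exp_le_one_iff.mpr (by nlinarith [sq_nonneg (t - 0)])
        _ = C := by rw [mul_one]
    have h1 : (∫ t in Set.Ioc a b, normpdf 0 1 t) ≤ ∫ _t in Set.Ioc a b, C := by
      refine setIntegral_mono_on (integrable_normpdf 0 one_pos).integrableOn ?_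
        measurableSet_Ioc hbound
      exact integrableOn_const (by rw [Real.volume_Ioc]; exact ENNReal.ofReal_ne_top)
    have h2 : (∫ _t in Set.Ioc a b, C) = C * (b - a) := by
      rw [setIntegral_const, Real.volume_real_Ioc_of_le hab, smul_eq_mul,
        mul_comm]
    rw [Phi_add hab]
    linarith
  have lip : LipschitzWith (Real.toNNReal C) Phi := by
    refine LipschitzWith.of_dist_le_mul fun a b => ?_
    have hCcoe : ((Real.toNNReal C : NNReal) : ℝ) = C := Real.coe_toNNReal _ hCpos.le
    rcases le_total a b with hab | hba
    · rw [Real.dist_eq, Real.dist_eq, abs_of_nonpos (by linarith [Phi_mono hab]),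
        abs_of_nonpos (by linarith), hCcoe]
      have := key a b hab
      nlinarith
    · rw [Real.dist_eq, Real.dist_eq, abs_of_nonneg (by linarith [Phi_mono hba]),
        abs_of_nonneg (by linarith), hCcoe]
      have := key b a hba
      nlinarith
  exact lip.continuous

lemma Phi_mem_Ioo (t : ℝ) : Phi t ∈ Set.Ioo (0:ℝ) 1 := by
  have hi := integrable_normpdf 0 one_pos
  have htot : ∫ x, normpdf 0 1 x = 1 := integral_normpdf 0 one_pos
  constructor
  · refine setIntegral_normpdf_pos 0 one_pos ?_
    rw [Real.volume_Iic]; exact ENNReal.zero_lt_top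
  · have hsplit := intervalIntegral.integral_Iic_add_Ioi (μ := volume) (b := t)
      hi.integrableOn hi.integrableOn
    have hpos : 0 < ∫ x in Set.Ioi t, normpdf 0 1 x := by
      refine setIntegral_normpdf_pos 0 one_pos ?_
      rw [Real.volume_Ioi]; exact ENNReal.zero_lt_top
    rw [htot] at hsplit
    rw [Phi]
    linarith

lemma Phi_surj {y : ℝ} (hy : y ∈ Set.Ioo (0:ℝ) 1) : ∃ t, Phi t = y := by
  have hi := integrable_normpdf 0 one_pos
  have htot : ∫ x, normpdf 0 1 x = 1 := integral_normpdf 0 one_pos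
  -- Phi n → 1
  have h1 : Filter.Tendsto (fun n : ℕ => Phi (n : ℝ)) Filter.atTop (nhds 1) := by
    have hU : (⋃ n : ℕ, Set.Iic ((n : ℝ))) = Set.univ := by
      ext z; simp only [Set.mem_iUnion, Set.mem_Iic, Set.mem_univ, iff_true]
      exact exists_nat_ge z
    have := tendsto_setIntegral_of_monotone (μ := volume) (f := normpdf 0 1)
      (s := fun n : ℕ => Set.Iic ((n : ℝ))) (fun _ => measurableSet_Iic)
      (fun n k hnk => Set.Iic_subset_Iic.mpr (by exact_mod_cast hnk)) (by
        rw [hU]; exact hi.integrableOn)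
    rwa [hU, MeasureTheory.setIntegral_univ, htot] at this
  -- Phi (-n) → 0
  have h2 : Filter.Tendsto (fun n : ℕ => Phi (-(n : ℝ))) Filter.atTop (nhds 0) := by
    have hU : (⋃ n : ℕ, Set.Ioi (-(n : ℝ))) = Set.univ := by
      ext z; simp only [Set.mem_iUnion, Set.mem_Ioi, Set.mem_univ, iff_true]
      obtain ⟨n, hn⟩ := exists_nat_gt (-z)
      exact ⟨n, by linarith⟩
    have h2' := tendsto_setIntegral_of_monotone (μ := volume) (f := normpdf 0 1)
      (s := fun n : ℕ => Set.Ioi (-(n : ℝ))) (fun _ => measurableSet_Ioi)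
      (fun n k hnk => Set.Ioi_subset_Ioi (by exact_mod_cast neg_le_neg (Nat.cast_le.mpr hnk)))
      (by rw [hU]; exact hi.integrableOn)
    rw [hU, MeasureTheory.setIntegral_univ, htot] at h2'
    have heq : (fun n : ℕ => Phi (-(n : ℝ)))
        = fun n : ℕ => 1 - ∫ x in Set.Ioi (-(n : ℝ)), normpdf 0 1 x := by
      funext n
      have hsplit := intervalIntegral.integral_Iic_add_Ioi (μ := volume) (b := -(n:ℝ))
        hi.integrableOn hi.integrableOn
      rw [htot] at hsplit
      rw [Phi]; linarith
    rw [heq]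
    simpa using Filter.Tendsto.const_sub 1 h2'
  obtain ⟨n₁, hn₁⟩ := (h2.eventually (Iio_mem_nhds hy.1)).exists
  obtain ⟨n₂, hn₂⟩ := (h1.eventually (Ioi_mem_nhds hy.2)).exists
  set N := max n₁ n₂ with hN
  have hA : Phi (-(N : ℝ)) < y :=
    lt_of_le_of_lt (Phi_mono (neg_le_neg (Nat.cast_le.mpr (le_max_left n₁ n₂)))) hn₁
  have hB : y < Phi (N : ℝ) :=
    lt_of_lt_of_le hn₂ (Phi_mono (Nat.cast_le.mpr (le_max_right n₁ n₂)))
  have hle : -(N : ℝ) ≤ (N : ℝ) := by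
    have : (0:ℝ) ≤ (N:ℝ) := Nat.cast_nonneg N
    linarith
  obtain ⟨t, _, ht⟩ := intermediate_value_Icc hle continuous_Phi.continuousOn ⟨hA.le, hB.le⟩
  exact ⟨t, ht⟩

lemma normpdf_mul (θ₀ x t : ℝ) {τ σ s2 : ℝ} (hτ : 0 < τ) (hσ : 0 < σ)
    (hs2 : s2 = Real.sqrt (τ ^ 2 + σ ^ 2)) :
    normpdf θ₀ τ t * normpdf t σ x =
      normpdf θ₀ s2 x * normpdf ((θ₀ * σ ^ 2 + x * τ ^ 2) / (τ ^ 2 + σ ^ 2)) (τ * σ / s2) t := by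
  have hv : (0:ℝ) < τ ^ 2 + σ ^ 2 := by positivity
  have hs2pos : 0 < s2 := hs2 ▸ Real.sqrt_pos.mpr hv
  have hsq : s2 ^ 2 = τ ^ 2 + σ ^ 2 := by rw [hs2, Real.sq_sqrt hv.le]
  have hπ : 0 < Real.sqrt (2 * Real.pi) := Real.sqrt_pos.mpr (by positivity)
  have hcoef : (τ * Real.sqrt (2 * Real.pi))⁻¹ * (σ * Real.sqrt (2 * Real.pi))⁻¹
      = (s2 * Real.sqrt (2 * Real.pi))⁻¹ * ((τ * σ / s2) * Real.sqrt (2 * Real.pi))⁻¹ := by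
    rw [← mul_inv, ← mul_inv]
    congr 1
    field_simp
  have hexp : (-(t - θ₀) ^ 2 / (2 * τ ^ 2)) + (-(x - t) ^ 2 / (2 * σ ^ 2))
      = (-(x - θ₀) ^ 2 / (2 * s2 ^ 2))
        + (-(t - (θ₀ * σ ^ 2 + x * τ ^ 2) / (τ ^ 2 + σ ^ 2)) ^ 2 / (2 * (τ * σ / s2) ^ 2)) := by
    have h1 : (τ * σ / s2) ^ 2 = τ ^ 2 * σ ^ 2 / (τ ^ 2 + σ ^ 2) := by
      rw [div_pow, hsq]; ring
    rw [h1, hsq]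
    field_simp
    ring
  unfold normpdf
  calc ((τ * Real.sqrt (2 * Real.pi))⁻¹ * Real.exp (-(t - θ₀) ^ 2 / (2 * τ ^ 2)))
        * ((σ * Real.sqrt (2 * Real.pi))⁻¹ * Real.exp (-(x - t) ^ 2 / (2 * σ ^ 2)))
      = ((τ * Real.sqrt (2 * Real.pi))⁻¹ * (σ * Real.sqrt (2 * Real.pi))⁻¹)
        * Real.exp ((-(t - θ₀) ^ 2 / (2 * τ ^ 2)) + (-(x - t) ^ 2 / (2 * σ ^ 2))) := by
        rw [Real.exp_add]; ring
    _ = ((s2 * Real.sqrt (2 * Real.pi))⁻¹ * ((τ * σ / s2) * Real.sqrt (2 * Real.pi))⁻¹)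
        * Real.exp ((-(x - θ₀) ^ 2 / (2 * s2 ^ 2))
          + (-(t - (θ₀ * σ ^ 2 + x * τ ^ 2) / (τ ^ 2 + σ ^ 2)) ^ 2 / (2 * (τ * σ / s2) ^ 2))) := by
        rw [hcoef, hexp]
    _ = _ := by rw [Real.exp_add]; ring

lemma conv_normpdf (θ₀ x : ℝ) {τ σ s2 : ℝ} (hτ : 0 < τ) (hσ : 0 < σ)
    (hs2 : s2 = Real.sqrt (τ ^ 2 + σ ^ 2)) :
    (∫ t, normpdf θ₀ τ t * normpdf t σ x) = normpdf θ₀ s2 x := by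
  have hv : (0:ℝ) < τ ^ 2 + σ ^ 2 := by positivity
  have hs2pos : 0 < s2 := hs2 ▸ Real.sqrt_pos.mpr hv
  have hsd : 0 < τ * σ / s2 := by positivity
  calc (∫ t, normpdf θ₀ τ t * normpdf t σ x)
      = ∫ t, normpdf θ₀ s2 x
          * normpdf ((θ₀ * σ ^ 2 + x * τ ^ 2) / (τ ^ 2 + σ ^ 2)) (τ * σ / s2) t := by
        congr 1; funext t; exact normpdf_mul θ₀ x t hτ hσ hs2
    _ = normpdf θ₀ s2 x
        * ∫ t, normpdf ((θ₀ * σ ^ 2 + x * τ ^ 2) / (τ ^ 2 + σ ^ 2)) (τ * σ / s2) t :=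
        MeasureTheory.integral_const_mul _ _
    _ = normpdf θ₀ s2 x := by rw [integral_normpdf _ hsd, mul_one]

/-- Random effects one-sided normal step-function publication bias model: with
`θ ~ N(θ₀, τ²)`, `x | θ ~ N(θ, σ²)`, and selection through the step function `w`
applied to the one-sided p-value `u(x) = 1 - Φ(x/σ)`, the marginal observed density
of `x` is the mixture of `N(θ₀, τ² + σ²)` densities truncated to the p-value
intervals, with weights `π*_j(θ₀,τ,σ) = ρ_j m_j / Σ_k ρ_k m_k` where `m j` is the
`N(θ₀, τ²+σ²)`-mass of the `j`-th interval. -/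
theorem stmt6 (θ₀ τ σ : ℝ) (hτ : 0 < τ) (hσ : 0 < σ) (J : ℕ) (hJ : 0 < J)
    (αv : ℕ → ℝ) (hα0 : αv 0 = 0) (hαJ : αv J = 1)
    (hαmono : ∀ i j, i ≤ J → j ≤ J → i < j → αv i < αv j)
    (ρ : ℕ → ℝ) (hρ : ∀ j ∈ Finset.Icc 1 J, 0 < ρ j)
    (u : ℝ → ℝ) (hu : ∀ x, u x = 1 - Phi (x / σ))
    (w : ℝ → ℝ)
    (hw : ∀ t, w t = ∑ j ∈ Finset.Icc 1 J, if t ∈ Set.Ioc (αv (j - 1)) (αv j) then ρ j else 0)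
    (S : ℕ → Set ℝ) (hS : ∀ j, S j = {x | u x ∈ Set.Ioc (αv (j - 1)) (αv j)})
    (s2 : ℝ) (hs2 : s2 = Real.sqrt (τ ^ 2 + σ ^ 2))
    (m : ℕ → ℝ) (hm : ∀ j, m j = ∫ x in S j, normpdf θ₀ s2 x)
    (g : ℝ → ℝ)
    (hg : ∀ x, g x = (∫ t, normpdf θ₀ τ t * normpdf t σ x) * w (u x))
    (Z : ℝ) (hZ : Z = ∫ x, g x) :
    ∀ x, g x / Z =
      ∑ j ∈ Finset.Icc 1 J,
        (ρ j * m j / ∑ k ∈ Finset.Icc 1 J, ρ k * m k) *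
          (Set.indicator (S j) (normpdf θ₀ s2) x / m j) := by
  have hv : (0:ℝ) < τ ^ 2 + σ ^ 2 := by positivity
  have hs2pos : 0 < s2 := hs2 ▸ Real.sqrt_pos.mpr hv
  have hucont : Continuous u := by
    have : u = fun x => 1 - Phi (x / σ) := funext hu
    rw [this]
    exact continuous_const.sub (continuous_Phi.comp (continuous_id.div_const σ))
  have hSmeas : ∀ j, MeasurableSet (S j) := by
    intro j
    rw [hS j]
    exact (hucont.measurable) measurableSet_Ioc
  -- g as a finite sum of indicators
  have hg' : ∀ y, g y = ∑ j ∈ Finset.Icc 1 J,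
      ρ j * Set.indicator (S j) (normpdf θ₀ s2) y := by
    intro y
    rw [hg y, conv_normpdf θ₀ y hτ hσ hs2, hw, Finset.mul_sum]
    refine Finset.sum_congr rfl fun j _ => ?_
    by_cases h : u y ∈ Set.Ioc (αv (j - 1)) (αv j)
    · rw [if_pos h, Set.indicator_of_mem (show y ∈ S j by rw [hS j]; exact h)]; ring
    · rw [if_neg h,
        Set.indicator_of_notMem (show y ∉ S j by rw [hS j]; exact h)]; ring
  -- Z equals sum of ρ j * m j
  have hZsum : Z = ∑ k ∈ Finset.Icc 1 J, ρ k * m k := by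
    rw [hZ]
    have h1 : (∫ y, g y) = ∫ y, ∑ j ∈ Finset.Icc 1 J,
        ρ j * Set.indicator (S j) (normpdf θ₀ s2) y := by
      congr 1; funext y; exact hg' y
    rw [h1, MeasureTheory.integral_finset_sum _ (fun j _ =>
      (((integrable_normpdf θ₀ hs2pos).indicator (hSmeas j)).const_mul (ρ j)))]
    refine Finset.sum_congr rfl fun j _ => ?_
    rw [MeasureTheory.integral_const_mul, MeasureTheory.integral_indicator (hSmeas j), hm j]
  -- positivity of m j
  have hmpos : ∀ j ∈ Finset.Icc 1 J, 0 < m j := by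
    intro j hj
    obtain ⟨hj1, hjJ⟩ := Finset.mem_Icc.mp hj
    have hαle0 : 0 ≤ αv (j - 1) := by
      rcases Nat.eq_zero_or_pos (j - 1) with h | h
      · rw [h, hα0]
      · rw [← hα0]
        exact (hαmono 0 (j - 1) (Nat.zero_le J) (by omega) h).le
    have hαle1 : αv j ≤ 1 := by
      rcases eq_or_lt_of_le hjJ with h | h
      · rw [h, hαJ]
      · rw [← hαJ]; exact (hαmono j J hjJ le_rfl h).le
    have hab : αv (j - 1) < αv j := hαmono (j - 1) j (by omega) hjJ (by omega)
    set p := (αv (j - 1) + αv j) / 2 with hp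
    have hp1 : αv (j - 1) < p := by rw [hp]; linarith
    have hp2 : p < αv j := by rw [hp]; linarith
    have hy : (1 - p) ∈ Set.Ioo (0:ℝ) 1 := ⟨by linarith, by linarith⟩
    obtain ⟨t, ht⟩ := Phi_surj hy
    have hx0 : u (σ * t) = p := by
      rw [hu, mul_comm, mul_div_assoc, div_self hσ.ne', mul_one, ht]; ring
    have hopen : IsOpen (u ⁻¹' Set.Ioo (αv (j - 1)) (αv j)) := isOpen_Ioo.preimage hucont
    have hsub : u ⁻¹' Set.Ioo (αv (j - 1)) (αv j) ⊆ S j := by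
      rw [hS j]
      intro z hz
      exact ⟨hz.1, hz.2.le⟩
    have hne : (σ * t) ∈ u ⁻¹' Set.Ioo (αv (j - 1)) (αv j) := by
      rw [Set.mem_preimage, hx0]
      exact ⟨hp1, hp2⟩
    have hvol : 0 < volume (S j) :=
      lt_of_lt_of_le (hopen.measure_pos volume ⟨_, hne⟩) (measure_mono hsub)
    rw [hm j]
    exact setIntegral_normpdf_pos θ₀ hs2pos hvol
  have hZpos : 0 < ∑ k ∈ Finset.Icc 1 J, ρ k * m k := by
    refine Finset.sum_pos (fun k hk => mul_pos (hρ k hk) (hmpos k hk)) ?_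
    exact ⟨1, Finset.mem_Icc.mpr ⟨le_rfl, hJ⟩⟩
  intro x
  rw [hg' x, hZsum, Finset.sum_div]
  refine Finset.sum_congr rfl fun j hj => ?_
  have hmj : m j ≠ 0 := (hmpos j hj).ne'
  field_simp
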